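/- arXiv:2303.16862 — 2 statements merged into one kernel-verified Lean document; each statement's English description precedes it below -/
import Mathlib

section
/- Let d > 2. The spherical uniform distribution U_d is not doubling: for every constant C ≥ 1 there exists a convex set S ⊆ 𝔹_d with 0 < ℓ_d(S) < ∞, whose center of mass b(S) := (1/ℓ_d(S)) ∫_S x dℓ_d(x) belongs to supp(U_d), such that U_d(S) > C · U_d(½S), where ½S := b(S) + ½(S − b(S)) denotes the dilation of S by the factor ½ with respect to its center of mass. -/
open MeasureTheory Set Metric Filter
open scoped ENNReal NNReal Topology RealInnerProductSpace

noncomputable section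

abbrev Euc (d : ℕ) := EuclideanSpace ℝ (Fin d)

/-- The normalizing constant `a_d = 2 π^{d/2} / Γ(d/2)`. -/
def aConst (d : ℕ) : ℝ := 2 * Real.pi ^ ((d : ℝ) / 2) / Real.Gamma ((d : ℝ) / 2)

/-- The spherical uniform distribution `U_d` on the open unit ball. -/
def sphericalUniform (d : ℕ) : Measure (Euc d) :=
  volume.withDensity fun x => ENNReal.ofReal
    ((ball (0 : Euc d) 1 \ {0}).indicator (fun x => 1 / (aConst d * ‖x‖ ^ (d - 1))) x)

/-- Subdifferential of a convex function `f : ℝ^d → ℝ`. -/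
def subdiff {d : ℕ} (f : Euc d → ℝ) (x : Euc d) : Set (Euc d) :=
  {y | ∀ z, f x + ⟪y, z - x⟫ ≤ f z}

/-- Subdifferential relative to a set `Ω`. -/
def subdiffOn {d : ℕ} (Ω : Set (Euc d)) (f : Euc d → ℝ) (u : Euc d) : Set (Euc d) :=
  {y | ∀ z ∈ Ω, f u + ⟪y, z - u⟫ ≤ f z}

/-- Support of a measure. -/
def msupport {d : ℕ} (P : Measure (Euc d)) : Set (Euc d) :=
  {x | ∀ U : Set (Euc d), IsOpen U → x ∈ U → 0 < P U}

/-- Assumption A: `P` is a Borel probability measure absolutely continuous with density `p`,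
locally bounded away from `0` and `∞` on `𝒳 ∩ R𝔹_d`. -/
def AssumptionA {d : ℕ} (P : Measure (Euc d)) (p : Euc d → ℝ) : Prop :=
  IsProbabilityMeasure P ∧
  P = volume.withDensity (fun x => ENNReal.ofReal (p x)) ∧
  ∀ R : ℝ, 0 < R → ∃ lam Lam : ℝ, 0 < lam ∧ lam ≤ Lam ∧
    ∀ x ∈ interior (msupport P) ∩ ball (0 : Euc d) R, lam ≤ p x ∧ p x ≤ Lam

/-- A center-outward potential for `P`. -/
def IsCenterOutwardPotential {d : ℕ} (P : Measure (Euc d)) (φ : Euc d → ℝ) : Prop :=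
  ConvexOn ℝ univ φ ∧
  (⋃ x, subdiff φ x) ⊆ closedBall (0 : Euc d) 1 ∧
  ∃ T : Euc d → Euc d, Measurable T ∧
    (∀ᵐ x ∂(volume : Measure (Euc d)), T x ∈ subdiff φ x) ∧
    P.map T = sphericalUniform d

/-- A quantile potential for `P`. -/
def IsQuantilePotential {d : ℕ} (P : Measure (Euc d)) (ψ : Euc d → ℝ) : Prop :=
  ConvexOn ℝ (ball (0 : Euc d) 1) ψ ∧
  ∃ S : Euc d → Euc d, Measurable S ∧
    (∀ᵐ u ∂(volume : Measure (Euc d)), u ∈ ball (0 : Euc d) 1 →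
      S u ∈ subdiffOn (ball (0 : Euc d) 1) ψ u) ∧
    (sphericalUniform d).map S = P

/-- Center of mass of a set. -/
def centerOfMass {d : ℕ} (S : Set (Euc d)) : Euc d :=
  (volume S).toReal⁻¹ • ∫ x in S, x

/-- Dilation of `S` by the factor `1/2` with respect to its center of mass. -/
def halfDilation {d : ℕ} (S : Set (Euc d)) : Set (Euc d) :=
  (fun x => centerOfMass S + (2⁻¹ : ℝ) • (x - centerOfMass S)) '' S

/-!
Take the thin slab `S = [0, 1/2] × [-s, s]^(d-1)`. It is symmetric about `b = (1/4, 0, …, 0)`,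
so `b` is its center of mass, and `½S` keeps distance at least `1/8` from the origin, where the
density of `U_d` is bounded; hence `U_d(½S) ≲ vol(½S) ≍ s^(d-1)`. On the other hand `S` contains
the box `[0, s] × [-s, s]^(d-1)` at the origin, on which the density is `≳ s^(1-d)`, so
`U_d(S) ≳ s`. For `d > 2` the ratio `s^(2-d)` is unbounded as `s → 0`.
-/

section

variable {d : ℕ}

theorem aConst_pos [NeZero d] : 0 < aConst d := by
  have hd : 0 < (d : ℝ) / 2 := by have := NeZero.pos d; positivity
  have := Real.Gamma_pos_of_pos hd
  unfold aConst
  positivity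

theorem ofReal_mul_volume_le_sphericalUniform [NeZero d] {A : Set (Euc d)} {r : ℝ}
    (hA : A ⊆ ball 0 1 ∩ closedBall 0 r) :
    ENNReal.ofReal (1 / (aConst d * r ^ (d - 1))) * volume A ≤ sphericalUniform d A := by
  rw [sphericalUniform, withDensity_apply', ← setLIntegral_const]
  refine lintegral_mono_ae ?_
  have hK : ∀ᵐ x ∂volume.restrict A, x ∈ ball 0 1 ∩ closedBall (0 : Euc d) r :=
    ae_mono (Measure.restrict_mono hA le_rfl)
      (ae_restrict_mem (measurableSet_ball.inter measurableSet_closedBall))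
  have h0 : ∀ᵐ x ∂volume.restrict A, x ≠ (0 : Euc d) :=
    ae_restrict_of_ae (compl_mem_ae_iff.mpr (measure_singleton 0))
  filter_upwards [hK, h0] with x ⟨hx1, hxr⟩ hx0
  rw [indicator_of_mem (mem_sdiff_of_mem hx1 hx0)]
  have hx : 0 < ‖x‖ := norm_pos_iff.mpr hx0
  have := aConst_pos (d := d)
  gcongr
  simpa using hxr

theorem sphericalUniform_le_ofReal_mul_volume [NeZero d] {A : Set (Euc d)} {r : ℝ} (hr : 0 < r)
    (hA : A ⊆ {x | r ≤ ‖x‖}) :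
    sphericalUniform d A ≤ ENNReal.ofReal (1 / (aConst d * r ^ (d - 1))) * volume A := by
  rw [sphericalUniform, withDensity_apply', ← setLIntegral_const]
  refine lintegral_mono_ae ?_
  have hK : ∀ᵐ x ∂volume.restrict A, x ∈ {x : Euc d | r ≤ ‖x‖} :=
    ae_mono (Measure.restrict_mono hA le_rfl)
      (ae_restrict_mem (measurableSet_le measurable_const measurable_norm))
  filter_upwards [hK] with x (hx : r ≤ ‖x‖)
  have := aConst_pos (d := d)
  by_cases hxB : x ∈ ball (0 : Euc d) 1 \ {0}
  · rw [indicator_of_mem hxB]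
    gcongr
  · rw [indicator_of_notMem hxB, ENNReal.ofReal_zero]
    exact bot_le

theorem ball_subset_msupport_sphericalUniform [NeZero d] :
    ball (0 : Euc d) 1 ⊆ msupport (sphericalUniform d) := by
  intro b hb U hU hbU
  have hvol : 0 < volume (U ∩ ball 0 1) := (hU.inter isOpen_ball).measure_pos volume ⟨b, hbU, hb⟩
  calc 0 < ENNReal.ofReal (1 / (aConst d * 1 ^ (d - 1))) * volume (U ∩ ball 0 1) :=
        ENNReal.mul_pos (by simp [aConst_pos]) hvol.ne'
    _ ≤ sphericalUniform d (U ∩ ball 0 1) :=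
        ofReal_mul_volume_le_sphericalUniform fun x hx => ⟨hx.2, ball_subset_closedBall hx.2⟩
    _ ≤ sphericalUniform d U := measure_mono inter_subset_left

theorem centerOfMass_eq_of_preimage_const_sub_eq {S : Set (Euc d)} {p : Euc d}
    (hS : (p - ·) ⁻¹' S = S) (h0 : volume S ≠ 0) (htop : volume S ≠ ∞)
    (hint : IntegrableOn (fun x => x) S) : centerOfMass S = (2 : ℝ)⁻¹ • p := by
  have hrefl : ∫ x in S, (p - x) = ∫ x in S, x := by
    conv_lhs => rw [← hS]
    exact (Measure.measurePreserving_sub_left volume p).setIntegral_preimage_emb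
      (Homeomorph.subLeft p).measurableEmbedding (fun x => x) S
  have hsum : volume.real S • p = (2 : ℝ) • ∫ x in S, x := by
    rw [two_smul, ← sub_eq_iff_eq_add, ← setIntegral_const,
      ← integral_sub (integrableOn_const (C := p) htop) hint, hrefl]
  have hV : volume.real S ≠ 0 := ENNReal.toReal_ne_zero.mpr ⟨h0, htop⟩
  rw [centerOfMass, ← measureReal_def, inv_smul_eq_iff₀ hV, smul_comm, hsum, smul_smul]
  norm_num

theorem volume_halfDilation (S : Set (Euc d)) :
    volume (halfDilation S) = ENNReal.ofReal ((1 / 2) ^ d) * volume S := by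
  have : halfDilation S = AffineMap.homothety (centerOfMass S) (2⁻¹ : ℝ) '' S := by
    refine image_congr fun x _ => ?_
    rw [AffineMap.homothety_apply, vsub_eq_sub, vadd_eq_add, add_comm]
  rw [this, Measure.addHaar_image_homothety, finrank_euclideanSpace_fin]
  norm_num

theorem norm_le_sum_abs (x : Euc d) : ‖x‖ ≤ ∑ j, |x j| := by
  conv_lhs => rw [← (EuclideanSpace.basisFun (Fin d) ℝ).sum_repr x]
  refine (norm_sum_le _ _).trans (le_of_eq ?_)
  simp [norm_smul]

def coordBox (l u : Fin d → ℝ) : Set (Euc d) := WithLp.ofLp ⁻¹' Icc l u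

theorem volume_coordBox (l u : Fin d → ℝ) :
    volume (coordBox l u) = ∏ j, ENNReal.ofReal (u j - l j) := by
  rw [coordBox, (PiLp.volume_preserving_ofLp _).measure_preimage
    measurableSet_Icc.nullMeasurableSet, Real.volume_Icc_pi]

theorem convex_coordBox (l u : Fin d → ℝ) : Convex ℝ (coordBox l u) :=
  (convex_Icc l u).linear_preimage (WithLp.linearEquiv 2 ℝ (Fin d → ℝ)).toLinearMap

theorem isCompact_coordBox (l u : Fin d → ℝ) : IsCompact (coordBox l u) :=
  (PiLp.homeomorph 2 _).isCompact_preimage.mpr isCompact_Icc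

theorem preimage_const_sub_coordBox (l u : Fin d → ℝ) :
    (WithLp.toLp 2 (l + u) - ·) ⁻¹' coordBox l u = coordBox l u := by
  ext x
  change l + u - x.ofLp ∈ Icc l u ↔ x.ofLp ∈ Icc l u
  rw [← mem_preimage, preimage_const_sub_Icc, add_sub_cancel_right, add_sub_cancel_left]

theorem centerOfMass_coordBox {l u : Fin d → ℝ} (h : ∀ j, l j < u j) :
    centerOfMass (coordBox l u) = (2 : ℝ)⁻¹ • WithLp.toLp 2 (l + u) := by
  have hvol : volume (coordBox l u) ≠ 0 := by
    simp [volume_coordBox, Finset.prod_eq_zero_iff, h]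
  exact centerOfMass_eq_of_preimage_const_sub_eq (preimage_const_sub_coordBox l u) hvol
    (isCompact_coordBox l u).measure_lt_top.ne
    (continuousOn_id.integrableOn_compact (isCompact_coordBox l u))

def slab (i : Fin d) (a b s : ℝ) : Set (Euc d) :=
  coordBox (Function.update (fun _ => -s) i a) (Function.update (fun _ => s) i b)

theorem mem_slab {i : Fin d} {a b s : ℝ} {x : Euc d} :
    x ∈ slab i a b s ↔ x i ∈ Icc a b ∧ ∀ j ≠ i, x j ∈ Icc (-s) s := by
  simp only [slab, coordBox, mem_preimage, mem_Icc, Pi.le_def, ← forall_and]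
  constructor
  · intro h
    exact ⟨by simpa using h i, fun j hj => by simpa [hj] using h j⟩
  · rintro ⟨hi, ho⟩ j
    rcases eq_or_ne j i with rfl | hj
    · simpa using hi
    · simpa [hj] using ho j hj

theorem volume_slab (i : Fin d) {a b s : ℝ} (hab : a ≤ b) (hs : 0 ≤ s) :
    volume (slab i a b s) = ENNReal.ofReal ((b - a) * (2 * s) ^ (d - 1)) := by
  have hside : (fun j => ENNReal.ofReal
        (Function.update (fun _ => s) i b j - Function.update (fun _ => -s) i a j))
      = Function.update (fun _ => ENNReal.ofReal (2 * s)) i (ENNReal.ofReal (b - a)) := by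
    funext j
    rcases eq_or_ne j i with rfl | hj
    · simp
    · simp [hj, two_mul]
  rw [slab, volume_coordBox, hside, Finset.prod_update_of_mem (Finset.mem_univ i),
    Finset.prod_const, ENNReal.ofReal_mul (sub_nonneg.mpr hab), ENNReal.ofReal_pow (by positivity)]
  simp [Finset.card_univ_sdiff]

theorem norm_le_of_mem_slab {i : Fin d} {a b s : ℝ} {x : Euc d} (hs : 0 ≤ s)
    (hx : x ∈ slab i a b s) : ‖x‖ ≤ max |a| |b| + d * s := by
  rw [mem_slab] at hx
  calc ‖x‖ ≤ ∑ j, |x j| := norm_le_sum_abs x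
    _ ≤ ∑ j, ((if j = i then max |a| |b| else 0) + s) := by
        refine Finset.sum_le_sum fun j _ => ?_
        rcases eq_or_ne j i with rfl | hj
        · simpa using (abs_le_max_abs_abs hx.1.1 hx.1.2).trans (le_add_of_nonneg_right hs)
        · simpa [hj] using abs_le.mpr (hx.2 j hj)
    _ = max |a| |b| + d * s := by simp [Finset.sum_add_distrib]

theorem slab_subset_ball {i : Fin d} {a b s : ℝ} (hs : 0 ≤ s) (h : max |a| |b| + d * s < 1) :
    slab i a b s ⊆ ball 0 1 := fun _ hx =>
  mem_ball_zero_iff.mpr ((norm_le_of_mem_slab hs hx).trans_lt h)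

theorem centerOfMass_slab (i : Fin d) {a b s : ℝ} (hab : a < b) (hs : 0 < s) :
    centerOfMass (slab i a b s) = EuclideanSpace.single i ((a + b) / 2) := by
  have hlu : ∀ j, Function.update (fun _ => -s) i a j < Function.update (fun _ => s) i b j := by
    intro j
    rcases eq_or_ne j i with rfl | hj
    · simpa using hab
    · simp only [Function.update_of_ne hj]; linarith
  rw [slab, centerOfMass_coordBox hlu]
  ext j
  rcases eq_or_ne j i with rfl | hj
  · simp only [WithLp.toLp_add, PiLp.add_apply, PiLp.smul_apply, Function.update_self,
      smul_eq_mul, PiLp.single_eq_same]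
    ring
  · simp [hj]

theorem halfDilation_slab_subset (i : Fin d) {a b s : ℝ} (hab : a < b) (hs : 0 < s) :
    halfDilation (slab i a b s) ⊆ {y | (3 * a + b) / 4 ≤ y i} := by
  rintro _ ⟨x, hx, rfl⟩
  have := (mem_slab.mp hx).1.1
  simp only [centerOfMass_slab i hab hs, mem_ofPred_eq, PiLp.add_apply, PiLp.single_eq_same,
    PiLp.smul_apply, PiLp.sub_apply, smul_eq_mul]
  linarith

theorem sphericalUniform_halfDilation_slab_le [NeZero d] (i : Fin d) {s : ℝ} (hs : 0 < s) :
    sphericalUniform d (halfDilation (slab i 0 (1 / 2) s))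
      ≤ ENNReal.ofReal (8 ^ (d - 1) / (4 * aConst d) * s ^ (d - 1)) := by
  have hfar : halfDilation (slab i 0 (1 / 2) s) ⊆ {y | 1 / 8 ≤ ‖y‖} := fun y hy =>
    calc (1 / 8 : ℝ) = (3 * 0 + 1 / 2) / 4 := by norm_num
      _ ≤ y i := halfDilation_slab_subset i (by norm_num) hs hy
      _ ≤ ‖y‖ := (le_abs_self _).trans (PiLp.norm_apply_le y i)
  have ha := aConst_pos (d := d)
  calc sphericalUniform d (halfDilation (slab i 0 (1 / 2) s))
      ≤ ENNReal.ofReal (1 / (aConst d * (1 / 8) ^ (d - 1)))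
          * volume (halfDilation (slab i 0 (1 / 2) s)) :=
        sphericalUniform_le_ofReal_mul_volume (by norm_num) hfar
    _ = ENNReal.ofReal (8 ^ (d - 1) / (4 * aConst d) * s ^ (d - 1)) := by
        rw [volume_halfDilation, volume_slab i (by norm_num) hs.le, ← ENNReal.ofReal_mul
          (by positivity), ← ENNReal.ofReal_mul (by positivity)]
        congr 1
        obtain ⟨k, rfl⟩ : ∃ k, d = k + 1 := ⟨d - 1, (Nat.succ_pred_eq_of_pos (NeZero.pos d)).symm⟩
        rw [Nat.add_sub_cancel, one_div_pow, mul_pow, pow_succ, one_div_pow]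
        field_simp
        norm_num

theorem ofReal_le_sphericalUniform_slab [NeZero d] (i : Fin d) {s : ℝ} (hs : 0 < s)
    (hds : d * s < 1 / 2) :
    ENNReal.ofReal ((2 / (d + 1)) ^ (d - 1) / aConst d * s)
      ≤ sphericalUniform d (slab i 0 (1 / 2) s) := by
  have ha := aConst_pos (d := d)
  have hd : (1 : ℝ) ≤ d := by exact_mod_cast NeZero.one_le
  have hsd : s ≤ d * s := le_mul_of_one_le_left hs.le hd
  have hnear : slab i 0 s s ⊆ ball 0 1 ∩ closedBall (0 : Euc d) ((d + 1) * s) := fun x hx => by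
    have := norm_le_of_mem_slab hs.le hx
    simp only [abs_zero, abs_of_pos hs, max_eq_right hs.le] at this
    exact ⟨mem_ball_zero_iff.mpr (by linarith), mem_closedBall_zero_iff.mpr (by linarith)⟩
  have hsub : slab i 0 s s ⊆ slab i 0 (1 / 2) s := fun x hx => by
    rw [mem_slab] at hx ⊢
    exact ⟨⟨hx.1.1, by linarith [hx.1.2]⟩, hx.2⟩
  calc ENNReal.ofReal ((2 / (d + 1)) ^ (d - 1) / aConst d * s)
      = ENNReal.ofReal (1 / (aConst d * ((d + 1) * s) ^ (d - 1))) * volume (slab i 0 s s) := by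
        rw [volume_slab i hs.le hs.le, ← ENNReal.ofReal_mul (by positivity)]
        congr 1
        rw [sub_zero, div_pow, mul_pow, mul_pow]
        field_simp
    _ ≤ sphericalUniform d (slab i 0 s s) := ofReal_mul_volume_le_sphericalUniform hnear
    _ ≤ sphericalUniform d (slab i 0 (1 / 2) s) := measure_mono hsub

theorem exists_pos_mul_pow_lt_mul {m : ℕ} (hm : 1 < m) (A : ℝ) {K ε : ℝ} (hK : 0 < K)
    (hε : 0 < ε) : ∃ s, 0 < s ∧ s < ε ∧ A * s ^ m < K * s := by
  have hsmall : ∀ᶠ s in 𝓝[>] (0 : ℝ), A * s ^ (m - 1) < K := by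
    have : Tendsto (fun s : ℝ => A * s ^ (m - 1)) (𝓝 0) (𝓝 0) := by
      simpa [zero_pow (Nat.sub_ne_zero_of_lt hm)] using
        ((continuous_pow (m - 1)).const_mul A).tendsto 0
    exact nhdsWithin_le_nhds (this.eventually (gt_mem_nhds hK))
  obtain ⟨s, hs, hs0, hsε⟩ := (hsmall.and (Ioo_mem_nhdsGT hε)).exists
  refine ⟨s, hs0, hsε, ?_⟩
  calc A * s ^ m = A * s ^ (m - 1) * s := by rw [mul_assoc, ← pow_succ, Nat.sub_add_cancel hm.le]
    _ < K * s := mul_lt_mul_of_pos_right hs hs0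

end

/-- for `d > 2` the spherical uniform distribution is not doubling. -/
theorem stmt_5 {d : ℕ} (hd : 2 < d) :
    ∀ C : ℝ, 1 ≤ C → ∃ S : Set (Euc d),
      S ⊆ ball (0 : Euc d) 1 ∧ Convex ℝ S ∧
      0 < volume S ∧ volume S < ⊤ ∧
      centerOfMass S ∈ msupport (sphericalUniform d) ∧
      ENNReal.ofReal C * sphericalUniform d (halfDilation S) < sphericalUniform d S := by
  intro C hC
  have : NeZero d := ⟨by omega⟩
  have ha := aConst_pos (d := d)
  obtain ⟨s, hs0, hsd, hs⟩ := exists_pos_mul_pow_lt_mul (m := d - 1) (by omega)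
    (C * (8 ^ (d - 1) / (4 * aConst d))) (K := (2 / (d + 1)) ^ (d - 1) / aConst d)
    (by positivity) (ε := 1 / (2 * d)) (by positivity)
  have hds : (d : ℝ) * s < 1 / 2 := by
    rw [lt_div_iff₀ (by positivity)] at hsd
    linarith
  refine ⟨slab 0 0 (1 / 2) s, slab_subset_ball hs0.le (by norm_num; linarith),
    convex_coordBox _ _, ?_, ?_, ?_, ?_⟩
  · rw [volume_slab 0 (by norm_num) hs0.le]
    exact ENNReal.ofReal_pos.mpr (by positivity)
  · rw [volume_slab 0 (by norm_num) hs0.le]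
    exact ENNReal.ofReal_lt_top
  · refine ball_subset_msupport_sphericalUniform ?_
    rw [centerOfMass_slab 0 (by norm_num) hs0, mem_ball_zero_iff, PiLp.norm_single]
    norm_num
  · calc ENNReal.ofReal C * sphericalUniform d (halfDilation (slab 0 0 (1 / 2) s))
        ≤ ENNReal.ofReal C * ENNReal.ofReal (8 ^ (d - 1) / (4 * aConst d) * s ^ (d - 1)) := by
          gcongr
          exact sphericalUniform_halfDilation_slab_le 0 hs0
      _ = ENNReal.ofReal (C * (8 ^ (d - 1) / (4 * aConst d)) * s ^ (d - 1)) := by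
          rw [← ENNReal.ofReal_mul (by linarith), mul_assoc]
      _ < ENNReal.ofReal ((2 / (d + 1)) ^ (d - 1) / aConst d * s) :=
          (ENNReal.ofReal_lt_ofReal_iff (by positivity)).mpr hs
      _ ≤ sphericalUniform d (slab 0 0 (1 / 2) s) := ofReal_le_sphericalUniform_slab 0 hs0 hds
end
end

section
/- Let d ≥ 1, let P satisfy Assumption A, and let φ be a center-outward potential for P. Then ∂φ(𝒳) ∩ 𝕊_{d−1} = ∅; that is, for every x ∈ 𝒳 and every y ∈ ∂φ(x) one has |y| < 1. -/
/-!
If a unit vector `y` were a subgradient of `φ` at an interior point `x₀` of the support,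
monotonicity of `∂φ` together with `∂φ ⊆ B̄_d` would force every subgradient at points of the thin
cone `{x₀ + s y + v : ‖v‖ ≤ ε s / 2}` into `B̄(y, ε)`. Near `x₀` this cone contains about `1 / ε`
disjoint balls of radius about `ε`, of total `P`-mass `≳ ε^(d-1)` because the density of `P` is
bounded below there, whereas the density of `U_d` is bounded near the sphere, so
`U_d (B̄(y, ε)) ≲ ε^d`. As `T` pushes `P` forward to `U_d`, letting `ε → 0` gives a contradiction.
-/

open MeasureTheory Set Metric Filter
open scoped ENNReal NNReal Topology RealInnerProductSpace

noncomputable section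

section InnerProduct

variable {E : Type*} [NormedAddCommGroup E] [InnerProductSpace ℝ E]

lemma two_mul_inner_sub_le_neg_norm_sub_sq {y z : E} (h : ‖z‖ ≤ ‖y‖) :
    2 * ⟪z - y, y⟫ ≤ -‖z - y‖ ^ 2 := by
  have hz : ‖z‖ ^ 2 = ‖z - y‖ ^ 2 + 2 * ⟪z - y, y⟫ + ‖y‖ ^ 2 := by
    simpa using norm_add_sq_real (z - y) y
  nlinarith [norm_nonneg z]

lemma norm_sub_le_of_inner_nonneg {y z w : E} {s ε : ℝ} (hzy : ‖z‖ ≤ ‖y‖)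
    (hw : 0 ≤ ⟪z - y, w⟫) (hs : 0 < s) (hws : ‖w - s • y‖ ≤ ε / 2 * s) :
    ‖z - y‖ ≤ ε := by
  have hsplit : ⟪z - y, w⟫ = s * ⟪z - y, y⟫ + ⟪z - y, w - s • y⟫ := by
    rw [inner_sub_right, real_inner_smul_right]; ring
  have hcs : ⟪z - y, w - s • y⟫ ≤ ‖z - y‖ * (ε / 2 * s) :=
    (real_inner_le_norm _ _).trans (mul_le_mul_of_nonneg_left hws (norm_nonneg _))
  have hangle := two_mul_inner_sub_le_neg_norm_sub_sq hzy
  have hε : 0 ≤ ε := by nlinarith [norm_nonneg (w - s • y)]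
  have hsq : ‖z - y‖ * ‖z - y‖ ≤ ε * ‖z - y‖ := by nlinarith
  nlinarith [norm_nonneg (z - y)]

end InnerProduct

open Function in
lemma pairwise_disjoint_ball_smul_add {E : Type*} [NormedAddCommGroup E] [NormedSpace ℝ E]
    (x y : E) (hy : ‖y‖ = 1) (a : ℝ) {r : ℝ} (hr : 0 < r) :
    Pairwise (Disjoint on fun k : ℕ => ball (x + ((a + k) * (2 * r)) • y) r) := by
  intro j k hjk
  apply ball_disjoint_ball
  have hjk' : (1 : ℝ) ≤ |(j : ℝ) - k| := by
    have : (1 : ℤ) ≤ |(j : ℤ) - k| := Int.one_le_abs (sub_ne_zero.2 (by exact_mod_cast hjk))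
    exact_mod_cast this
  rw [dist_add_left, dist_eq_norm, ← sub_smul, norm_smul, hy, mul_one, Real.norm_eq_abs,
    show (a + j) * (2 * r) - (a + k) * (2 * r) = (j - k) * (2 * r) by ring, abs_mul,
    abs_of_pos (by positivity : (0 : ℝ) < 2 * r)]
  nlinarith

lemma withDensity_le_mul_of_forall_le {α : Type*} [MeasurableSpace α] (μ : Measure α)
    {f : α → ℝ≥0∞} {s : Set α} (hs : MeasurableSet s) {c : ℝ≥0∞} (hf : ∀ x ∈ s, f x ≤ c) :
    μ.withDensity f s ≤ c * μ s := by
  rw [withDensity_apply _ hs, ← setLIntegral_const]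
  exact setLIntegral_mono' hs hf

lemma mul_le_withDensity_of_forall_le {α : Type*} [MeasurableSpace α] (μ : Measure α)
    {f : α → ℝ≥0∞} {s : Set α} (hs : MeasurableSet s) {c : ℝ≥0∞} (hf : ∀ x ∈ s, c ≤ f x) :
    c * μ s ≤ μ.withDensity f s := by
  rw [withDensity_apply _ hs, ← setLIntegral_const]
  exact setLIntegral_mono' hs hf

lemma aConst_nonneg (d : ℕ) : 0 ≤ aConst d :=
  div_nonneg (by positivity) (Real.Gamma_nonneg_of_nonneg (by positivity))

lemma sphericalUniform_le_mul_volume {d : ℕ} {s : Set (Euc d)} (hs : MeasurableSet s) {ρ : ℝ}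
    (hρ : 0 < ρ) (hsρ : ∀ x ∈ s, ρ ≤ ‖x‖) :
    sphericalUniform d s ≤ ENNReal.ofReal (1 / (aConst d * ρ ^ (d - 1))) * volume s := by
  refine withDensity_le_mul_of_forall_le _ hs fun x hx => ENNReal.ofReal_le_ofReal ?_
  refine indicator_apply_le' (fun _ => ?_) (fun _ => by positivity [aConst_nonneg d])
  rcases (aConst_nonneg d).eq_or_lt with ha | ha
  · simp [← ha]
  · exact one_div_le_one_div_of_le (by positivity)
      (mul_le_mul_of_nonneg_left (pow_le_pow_left₀ hρ.le (hsρ x hx) _) ha.le)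

lemma norm_le_one_of_mem_subdiff {d : ℕ} {P : Measure (Euc d)} {φ : Euc d → ℝ}
    (hφ : IsCenterOutwardPotential P φ) {x y : Euc d} (hy : y ∈ subdiff φ x) : ‖y‖ ≤ 1 := by
  simpa using hφ.2.1 (mem_iUnion.2 ⟨x, hy⟩)

lemma inner_sub_nonneg_of_mem_subdiff {d : ℕ} {φ : Euc d → ℝ} {a b y z : Euc d}
    (hy : y ∈ subdiff φ a) (hz : z ∈ subdiff φ b) : 0 ≤ ⟪z - y, b - a⟫ := by
  have h1 := hy b
  have h2 := hz a
  rw [← neg_sub b a, inner_neg_right] at h2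
  rw [inner_sub_left]
  linarith

lemma measure_le_sphericalUniform_of_subdiff_subset {d : ℕ} {P : Measure (Euc d)}
    {φ : Euc d → ℝ} (hφ : IsCenterOutwardPotential P φ) (hP : P ≪ volume) {A B : Set (Euc d)}
    (hB : MeasurableSet B) (hAB : ∀ x ∈ A, subdiff φ x ⊆ B) : P A ≤ sphericalUniform d B := by
  obtain ⟨T, hT, hTφ, hTP⟩ := hφ.2.2
  calc P A ≤ P (T ⁻¹' B) :=
        measure_mono_ae <| (hTφ.filter_mono hP.ae_le).mono fun x hx hxA => hAB x hxA hx
    _ = sphericalUniform d B := by rw [← hTP, Measure.map_apply hT hB]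

section UnitSubgradient

variable {d : ℕ} {P : Measure (Euc d)} {p : Euc d → ℝ} {φ : Euc d → ℝ} {x₀ y : Euc d}

/-- Along the ray `x₀ + ℝ₊ y` lie `n` disjoint balls of radius `δ / (4 n)` inside `ball x₀ δ`, at
all of whose points every subgradient is `1 / n`-close to `y` by monotonicity of `∂φ`. -/
lemma natCast_mul_volume_ball_le_of_mem_subdiff
    (hPp : P = volume.withDensity fun x => ENNReal.ofReal (p x))
    (hφ : IsCenterOutwardPotential P φ) (hy : y ∈ subdiff φ x₀) (hy1 : ‖y‖ = 1) {δ lam : ℝ}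
    (hδ : 0 < δ) (hlam : ∀ x ∈ ball x₀ δ, lam ≤ p x) {n : ℕ} (hn : 2 ≤ n) :
    n * (ENNReal.ofReal lam * volume (ball (0 : Euc d) (δ / (4 * n)))) ≤
      ENNReal.ofReal (1 / (aConst d * (1 / 2) ^ (d - 1))) *
        volume (closedBall (0 : Euc d) (1 / n)) := by
  have hn0 : (2 : ℝ) ≤ n := by exact_mod_cast hn
  set r := δ / (4 * n) with r_def
  have hr : 0 < r := by positivity
  set B : ℕ → Set (Euc d) := fun k => ball (x₀ + ((n + k) * (2 * r)) • y) r
  have hBsub : ∀ k < n, B k ⊆ ball x₀ δ := by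
    intro k hk
    have hk' : (k : ℝ) + 1 ≤ n := by exact_mod_cast hk
    refine ball_subset_ball' ?_
    rw [dist_self_add_left, norm_smul, hy1, mul_one, Real.norm_of_nonneg (by positivity)]
    have : 4 * n * r = δ := by rw [r_def]; field_simp
    nlinarith
  have hBsubdiff : ∀ k, ∀ x ∈ B k, subdiff φ x ⊆ closedBall y (1 / n) := by
    intro k x hx z hz
    rw [mem_closedBall, dist_eq_norm]
    refine norm_sub_le_of_inner_nonneg ((norm_le_one_of_mem_subdiff hφ hz).trans hy1.ge)
      (inner_sub_nonneg_of_mem_subdiff hy hz) (s := (n + k) * (2 * r)) (by positivity) ?_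
    have hxk : ‖x - x₀ - ((n + k) * (2 * r)) • y‖ < r := by
      rw [sub_sub, ← dist_eq_norm]; exact hx
    have : r ≤ 1 / n / 2 * ((n + k) * (2 * r)) := by
      rw [show 1 / (n : ℝ) / 2 * ((n + k) * (2 * r)) = r + k / n * r by field_simp]
      have : (0 : ℝ) ≤ k / n * r := by positivity
      linarith
    linarith
  have hmass : ∀ k < n, ENNReal.ofReal lam * volume (B k) ≤ P (B k) := fun k hk =>
    hPp ▸ mul_le_withDensity_of_forall_le _ measurableSet_ball fun x hx =>
      ENNReal.ofReal_le_ofReal (hlam x (hBsub k hk hx))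
  have hclosedBall : ∀ x ∈ closedBall y (1 / n), (1 / 2 : ℝ) ≤ ‖x‖ := by
    intro x hx
    have : 1 / (n : ℝ) ≤ 1 / 2 := one_div_le_one_div_of_le two_pos hn0
    have := norm_sub_norm_le y x
    rw [mem_closedBall, dist_eq_norm, norm_sub_rev] at hx
    linarith
  have hP : P ≪ volume := hPp ▸ withDensity_absolutelyContinuous _ _
  calc (n : ℝ≥0∞) * (ENNReal.ofReal lam * volume (ball (0 : Euc d) r))
      = ∑ k ∈ Finset.range n, ENNReal.ofReal lam * volume (B k) := by
        simp only [B, Measure.addHaar_ball_center, Finset.sum_const, Finset.card_range,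
          nsmul_eq_mul]
    _ ≤ ∑ k ∈ Finset.range n, P (B k) :=
        Finset.sum_le_sum fun k hk => hmass k (Finset.mem_range.1 hk)
    _ = P (⋃ k ∈ Finset.range n, B k) :=
        (measure_biUnion_finset ((pairwise_disjoint_ball_smul_add x₀ y hy1 n hr).set_pairwise _)
          fun _ _ => measurableSet_ball).symm
    _ ≤ sphericalUniform d (closedBall y (1 / n)) := by
        refine measure_le_sphericalUniform_of_subdiff_subset hφ hP measurableSet_closedBall ?_
        simp only [mem_iUnion, Finset.mem_range, exists_prop]
        rintro x ⟨k, -, hx⟩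
        exact hBsubdiff k x hx
    _ ≤ ENNReal.ofReal (1 / (aConst d * (1 / 2) ^ (d - 1))) * volume (closedBall y (1 / n)) :=
        sphericalUniform_le_mul_volume measurableSet_closedBall one_half_pos hclosedBall
    _ = _ := by rw [Measure.addHaar_closedBall_center]

lemma natCast_mul_le_of_mem_subdiff
    (hPp : P = volume.withDensity fun x => ENNReal.ofReal (p x))
    (hφ : IsCenterOutwardPotential P φ) (hy : y ∈ subdiff φ x₀) (hy1 : ‖y‖ = 1) {δ lam : ℝ}
    (hδ : 0 < δ) (hlam : ∀ x ∈ ball x₀ δ, lam ≤ p x) {n : ℕ} (hn : 2 ≤ n) :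
    n * (lam * (δ / 4) ^ d) ≤ 1 / (aConst d * (1 / 2) ^ (d - 1)) := by
  have hvol := natCast_mul_volume_ball_le_of_mem_subdiff hPp hφ hy hy1 hδ hlam hn
  have hn0 : (0 : ℝ) < n := by positivity
  have hC : 0 ≤ 1 / (aConst d * (1 / 2) ^ (d - 1)) := by positivity [aConst_nonneg d]
  rw [Measure.addHaar_ball_of_pos _ _ (by positivity),
    Measure.addHaar_closedBall _ _ (by positivity), finrank_euclideanSpace_fin,
    ← mul_assoc, ← mul_assoc, ← mul_assoc,
    ENNReal.mul_le_mul_iff_left (measure_ball_pos _ _ one_pos).ne' measure_ball_lt_top.ne,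
    ← ENNReal.ofReal_mul hC, ← ENNReal.ofReal_natCast, ← ENNReal.ofReal_mul (Nat.cast_nonneg n),
    ← ENNReal.ofReal_mul' (by positivity),
    ENNReal.ofReal_le_ofReal_iff (by positivity),
    show δ / (4 * n) = δ / 4 * (1 / n) by ring, mul_pow,
    show (n : ℝ) * lam * ((δ / 4) ^ d * (1 / n) ^ d) = n * (lam * (δ / 4) ^ d) * (1 / n) ^ d
      by ring] at hvol
  exact le_of_mul_le_mul_right hvol (by positivity)

end UnitSubgradient

theorem stmt_16_general {d : ℕ} (P : Measure (Euc d)) (p : Euc d → ℝ)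
    (hA : AssumptionA P p) (φ : Euc d → ℝ)
    (hφ : IsCenterOutwardPotential P φ) :
    ∀ x ∈ interior (msupport P), ∀ y ∈ subdiff φ x, ‖y‖ < 1 := by
  intro x₀ hx₀ y hy
  obtain ⟨-, hPp, hbound⟩ := hA
  refine (norm_le_one_of_mem_subdiff hφ hy).lt_of_ne fun hy1 => ?_
  obtain ⟨δ, hδ, hδX⟩ := isOpen_iff.1 isOpen_interior x₀ hx₀
  obtain ⟨lam, _, hlam_pos, -, hp⟩ := hbound (‖x₀‖ + δ) (by positivity)
  have hlow : ∀ x ∈ ball x₀ δ, lam ≤ p x := fun x hx =>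
    (hp x ⟨hδX hx, ball_subset_ball' (by rw [dist_zero_right, add_comm]) hx⟩).1
  have hpos : 0 < lam * (δ / 4) ^ d := by positivity
  obtain ⟨n, hn⟩ := exists_nat_gt (max 2 (1 / (aConst d * (1 / 2) ^ (d - 1)) / (lam * (δ / 4) ^ d)))
  have hn2 : 2 ≤ n := by exact_mod_cast (le_max_left _ _).trans hn.le
  have hlarge := (div_lt_iff₀ hpos).1 ((le_max_right _ _).trans_lt hn)
  exact (natCast_mul_le_of_mem_subdiff hPp hφ hy hy1 hδ hlow hn2).not_gt hlarge

/-- `∂φ(𝒳) ∩ 𝕊_{d-1} = ∅`: every subgradient of `φ` at a point of `𝒳` has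
norm strictly less than `1`. -/
theorem stmt_16 {d : ℕ} (hd : 1 ≤ d) (P : Measure (Euc d)) (p : Euc d → ℝ)
    (hA : AssumptionA P p) (φ : Euc d → ℝ)
    (hφ : IsCenterOutwardPotential P φ) :
    ∀ x ∈ interior (msupport P), ∀ y ∈ subdiff φ x, ‖y‖ < 1 :=
  stmt_16_general P p hA φ hφ
end
end
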